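/- arXiv:2105.11183 — 2 statements merged into one kernel-verified Lean document; each statement's English description precedes it below -/
import Mathlib

section
/- Define $N_1 = 2875$, $N_2 = 4876875/8$, $N_3 = 8564575000/27$, $N_4 = 15517926796875/64$, $N_5 = 229305888887648$, $N_6 = 248249742157695375$, $N_7 = 101216230345800061125625/343$, $N_8 = 192323666400003538944396875/512$, $N_9 = 367299732093982242625847031250/729$ as elements of $\mathbb{Q}$, and define $n_1, \ldots, n_9 \in \mathbb{Q}$ recursively by $n_d = N_d - \sum_{k \mid d,\ k > 1} n_{d/k}\, k^{-3}$. Then each $n_d$ for $1 \le d \le 9$ is an integer. -/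
open Finset

/-- The instanton numbers `n_d` of the quintic threefold, defined recursively from the
genus-0 Gromov–Witten invariants `N_d` (computed by the Atiyah–Bott formula for
`d ≤ 9`) via `n_d = N_d - ∑_{k ∣ d, k > 1} n_{d/k} k⁻³`, are integers for `1 ≤ d ≤ 9`. -/
theorem quintic_instanton_integral (N n : ℕ → ℚ)
    (hN1 : N 1 = 2875)
    (hN2 : N 2 = 4876875 / 8)
    (hN3 : N 3 = 8564575000 / 27)
    (hN4 : N 4 = 15517926796875 / 64)
    (hN5 : N 5 = 229305888887648)
    (hN6 : N 6 = 248249742157695375)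
    (hN7 : N 7 = 101216230345800061125625 / 343)
    (hN8 : N 8 = 192323666400003538944396875 / 512)
    (hN9 : N 9 = 367299732093982242625847031250 / 729)
    (hn : ∀ d, 1 ≤ d → d ≤ 9 →
      n d = N d - ∑ k ∈ d.divisors.filter (fun k => 1 < k), n (d / k) / (k : ℚ) ^ 3) :
    ∀ d, 1 ≤ d → d ≤ 9 → ∃ m : ℤ, n d = (m : ℚ) := by
  have h1 : n 1 = 2875 := by
    have h := hn 1 (by norm_num) (by norm_num)
    rw [show (Nat.divisors 1).filter (fun k => 1 < k) = ∅ from by decide] at h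
    norm_num [Finset.sum_insert, Finset.mem_insert, Finset.mem_singleton, Finset.sum_singleton, hN1] at h
    linarith
  have h2 : n 2 = 609250 := by
    have h := hn 2 (by norm_num) (by norm_num)
    rw [show (Nat.divisors 2).filter (fun k => 1 < k) = {2} from by decide] at h
    norm_num [Finset.sum_insert, Finset.mem_insert, Finset.mem_singleton, Finset.sum_singleton, hN2, h1] at h
    linarith
  have h3 : n 3 = 317206375 := by
    have h := hn 3 (by norm_num) (by norm_num)
    rw [show (Nat.divisors 3).filter (fun k => 1 < k) = {3} from by decide] at h
    norm_num [Finset.sum_insert, Finset.mem_insert, Finset.mem_singleton, Finset.sum_singleton, hN3, h1] at h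
    linarith
  have h4 : n 4 = 242467530000 := by
    have h := hn 4 (by norm_num) (by norm_num)
    rw [show (Nat.divisors 4).filter (fun k => 1 < k) = {2,4} from by decide] at h
    norm_num [Finset.sum_insert, Finset.mem_insert, Finset.mem_singleton, Finset.sum_singleton, hN4, h2, h1] at h
    linarith
  have h5 : n 5 = 229305888887625 := by
    have h := hn 5 (by norm_num) (by norm_num)
    rw [show (Nat.divisors 5).filter (fun k => 1 < k) = {5} from by decide] at h
    norm_num [Finset.sum_insert, Finset.mem_insert, Finset.mem_singleton, Finset.sum_singleton, hN5, h1] at h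
    linarith
  have h6 : n 6 = 248249742118022000 := by
    have h := hn 6 (by norm_num) (by norm_num)
    rw [show (Nat.divisors 6).filter (fun k => 1 < k) = {2,3,6} from by decide] at h
    norm_num [Finset.sum_insert, Finset.mem_insert, Finset.mem_singleton, Finset.sum_singleton, hN6, h3, h2, h1] at h
    linarith
  have h7 : n 7 = 295091050570845659250 := by
    have h := hn 7 (by norm_num) (by norm_num)
    rw [show (Nat.divisors 7).filter (fun k => 1 < k) = {7} from by decide] at h
    norm_num [Finset.sum_insert, Finset.mem_insert, Finset.mem_singleton, Finset.sum_singleton, hN7, h1] at h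
    linarith
  have h8 : n 8 = 375632160937476603550000 := by
    have h := hn 8 (by norm_num) (by norm_num)
    rw [show (Nat.divisors 8).filter (fun k => 1 < k) = {2,4,8} from by decide] at h
    norm_num [Finset.sum_insert, Finset.mem_insert, Finset.mem_singleton, Finset.sum_singleton, hN8, h4, h2, h1] at h
    linarith
  have h9 : n 9 = 503840510416985243645106250 := by
    have h := hn 9 (by norm_num) (by norm_num)
    rw [show (Nat.divisors 9).filter (fun k => 1 < k) = {3,9} from by decide] at h
    norm_num [Finset.sum_insert, Finset.mem_insert, Finset.mem_singleton, Finset.sum_singleton, hN9, h3, h1] at h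
    linarith
  intro d h1d h9d
  interval_cases d
  · exact ⟨2875, by rw [h1]; norm_num⟩
  · exact ⟨609250, by rw [h2]; norm_num⟩
  · exact ⟨317206375, by rw [h3]; norm_num⟩
  · exact ⟨242467530000, by rw [h4]; norm_num⟩
  · exact ⟨229305888887625, by rw [h5]; norm_num⟩
  · exact ⟨248249742118022000, by rw [h6]; norm_num⟩
  · exact ⟨295091050570845659250, by rw [h7]; norm_num⟩
  · exact ⟨375632160937476603550000, by rw [h8]; norm_num⟩
  · exact ⟨503840510416985243645106250, by rw [h9]; norm_num⟩
end

section
/- For each of the four lists of rationals $(N_1,N_2,N_3,N_4)$ given by $(1053,\ 423549/8,\ 6424365,\ 72925120125/64)$, $(1280,\ 92448,\ 422690816/27,\ 3883914084)$, $(720,\ 22518,\ 4834592/3,\ 672808059/4)$, and $(512,\ 9792,\ 11239424/27,\ 25705160)$, the rationals $n_d$ defined recursively by $n_d = N_d - \sum_{k \mid d,\ k>1} n_{d/k}\, k^{-3}$ for $1 \le d \le 4$ are all integers. -/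
open Finset

/-- For each of the four lists of genus-0 Gromov–Witten invariants `(N₁, N₂, N₃, N₄)`
of the complete intersection Calabi–Yau threefolds of multidegrees `(3,3)`, `(4,2)`,
`(3,2,2)` and `(2,2,2,2)`, the instanton numbers `n_d` defined recursively by
`n_d = N_d - ∑_{k ∣ d, k > 1} n_{d/k} k⁻³` are integers for `1 ≤ d ≤ 4`. -/
theorem cicy_instanton_integral (N n : ℕ → ℚ)
    (hN : (N 1 = 1053 ∧ N 2 = 423549 / 8 ∧ N 3 = 6424365 ∧ N 4 = 72925120125 / 64) ∨
          (N 1 = 1280 ∧ N 2 = 92448 ∧ N 3 = 422690816 / 27 ∧ N 4 = 3883914084) ∨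
          (N 1 = 720 ∧ N 2 = 22518 ∧ N 3 = 4834592 / 3 ∧ N 4 = 672808059 / 4) ∨
          (N 1 = 512 ∧ N 2 = 9792 ∧ N 3 = 11239424 / 27 ∧ N 4 = 25705160))
    (hn : ∀ d, 1 ≤ d → d ≤ 4 →
      n d = N d - ∑ k ∈ d.divisors.filter (fun k => 1 < k), n (d / k) / (k : ℚ) ^ 3) :
    ∀ d, 1 ≤ d → d ≤ 4 → ∃ m : ℤ, n d = (m : ℚ) := by
  have e1 := hn 1 (by norm_num) (by norm_num)
  have e2 := hn 2 (by norm_num) (by norm_num)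
  have e3 := hn 3 (by norm_num) (by norm_num)
  have e4 := hn 4 (by norm_num) (by norm_num)
  have d1 : (Nat.divisors 1).filter (fun k => 1 < k) = ∅ := by decide
  have d2 : (Nat.divisors 2).filter (fun k => 1 < k) = {2} := by decide
  have d3 : (Nat.divisors 3).filter (fun k => 1 < k) = {3} := by decide
  have d4 : (Nat.divisors 4).filter (fun k => 1 < k) = ({2, 4} : Finset ℕ) := by decide
  rw [d1] at e1
  rw [d2] at e2
  rw [d3] at e3
  rw [d4] at e4
  simp only [Finset.sum_empty, Finset.sum_singleton, Finset.sum_insert (by decide : (2:ℕ) ∉ ({4} : Finset ℕ))] at e1 e2 e3 e4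
  norm_num at e1 e2 e3 e4
  intro d hd1 hd4
  rcases hN with ⟨h1, h2, h3, h4⟩ | ⟨h1, h2, h3, h4⟩ | ⟨h1, h2, h3, h4⟩ | ⟨h1, h2, h3, h4⟩ <;>
    rw [h1] at e1 <;> rw [h2, e1] at e2 <;> rw [h3, e1] at e3 <;> rw [h4, e2, e1] at e4 <;>
    norm_num at e2 e3 e4 <;>
    interval_cases d
  · exact ⟨1053, by rw [e1]; norm_num⟩
  · exact ⟨52812, by rw [e2]; norm_num⟩
  · exact ⟨6424326, by rw [e3]; norm_num⟩
  · exact ⟨1139448384, by rw [e4]; norm_num⟩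
  · exact ⟨1280, by rw [e1]; norm_num⟩
  · exact ⟨92288, by rw [e2]; norm_num⟩
  · exact ⟨15655168, by rw [e3]; norm_num⟩
  · exact ⟨3883902528, by rw [e4]; norm_num⟩
  · exact ⟨720, by rw [e1]; norm_num⟩
  · exact ⟨22428, by rw [e2]; norm_num⟩
  · exact ⟨1611504, by rw [e3]; norm_num⟩
  · exact ⟨168199200, by rw [e4]; norm_num⟩
  · exact ⟨512, by rw [e1]; norm_num⟩
  · exact ⟨9728, by rw [e2]; norm_num⟩
  · exact ⟨416256, by rw [e3]; norm_num⟩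
  · exact ⟨25703936, by rw [e4]; norm_num⟩
end
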